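/- Berezin–Toeplitz quantization of a linear observable on coherent states: With the setup of the Coherent Factorization Property, if F : ℝⁿ → ℝ is linear (extended ℂ-linearly to ℂⁿ), then for every ξ = ξ^R + iξ^I ∈ ℂⁿ: ρ^F(K_ξ) = F(ξ^R − i ξ^I) · ρ(K_ξ). -/

import Mathlib

open MeasureTheory
open scoped Matrix

/-- The centered Gaussian probability measure on `ℝⁿ` with density
`∝ exp(−¼ g(φ,φ))`, where `g(x,y) = x ⬝ᵥ M y` for a positive definite symmetric `M`. -/
noncomputable def gR (n : ℕ) (M : Matrix (Fin n) (Fin n) ℝ) : Measure (Fin n → ℝ) :=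
  ((volume.withDensity
        fun φ : Fin n → ℝ => ENNReal.ofReal (Real.exp (-(1/4) * (φ ⬝ᵥ M.mulVec φ))))
      Set.univ)⁻¹ •
    (volume.withDensity
      fun φ : Fin n → ℝ => ENNReal.ofReal (Real.exp (-(1/4) * (φ ⬝ᵥ M.mulVec φ))))

/-- Embedding of real configurations into the complexification `ℂⁿ`. -/
noncomputable def cR (n : ℕ) (φ : Fin n → ℝ) : Fin n → ℂ := fun i => (φ i : ℂ)

/-- The ℂ-bilinear extension of `g` to `ℂⁿ`. -/
noncomputable def gC (n : ℕ) (M : Matrix (Fin n) (Fin n) ℝ) (x y : Fin n → ℂ) : ℂ :=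
  ∑ i, ∑ j, x i * (M i j : ℂ) * y j

/-- The coherent state wave function on the real Lagrangian subspace,
`K_ξ(φ) = exp(½ g(ξ^R, φ) − (i/2) g(ξ^I, φ))` for `ξ = ξ^R + i ξ^I`. -/
noncomputable def Kc (n : ℕ) (M : Matrix (Fin n) (Fin n) ℝ)
    (ξR ξI : Fin n → ℝ) (φ : Fin n → ℝ) : ℂ :=
  Complex.exp ((1/2 : ℂ) * gC n M (cR n ξR) (cR n φ)
    - (Complex.I / 2) * gC n M (cR n ξI) (cR n φ))

/-! ### Auxiliary lemmas -/

section Aux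

set_option linter.unusedSectionVars false

lemma quad_cont' (n : ℕ) (M : Matrix (Fin n) (Fin n) ℝ) :
    Continuous (fun φ : Fin n → ℝ => φ ⬝ᵥ M.mulVec φ) := by
  simp only [dotProduct, Matrix.mulVec]
  exact continuous_finset_sum _ fun i _ => (continuous_apply i).mul
    (continuous_finset_sum _ fun j _ => continuous_const.mul (continuous_apply j))

lemma quad_smul' (n : ℕ) (M : Matrix (Fin n) (Fin n) ℝ) (r : ℝ) (φ : Fin n → ℝ) :
    (r • φ) ⬝ᵥ M.mulVec (r • φ) = r^2 * (φ ⬝ᵥ M.mulVec φ) := by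
  rw [Matrix.mulVec_smul, dotProduct_smul, smul_dotProduct]
  simp [sq, mul_assoc, smul_eq_mul]

lemma quad_lower (n : ℕ) (M : Matrix (Fin n) (Fin n) ℝ) (hM : M.PosDef) :
    ∃ c > 0, ∀ φ : Fin n → ℝ, c * (∑ i, φ i ^ 2) ≤ φ ⬝ᵥ M.mulVec φ := by
  rcases Nat.eq_zero_or_pos n with hn | hn
  · subst hn
    exact ⟨1, one_pos, fun φ => by simp [dotProduct]⟩
  · set S : Set (Fin n → ℝ) := {φ | ∑ i, φ i ^ 2 = 1} with hS
    have hScl : IsClosed S :=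
      isClosed_eq (continuous_finset_sum _ fun i _ => (continuous_apply i).pow 2)
        continuous_const
    have hSbd : Bornology.IsBounded S := by
      apply Bornology.IsBounded.subset (Metric.isBounded_closedBall (x := (0 : Fin n → ℝ)) (r := 1))
      intro φ hφ
      simp only [Metric.mem_closedBall, dist_zero_right]
      rw [pi_norm_le_iff_of_nonneg (by norm_num)]
      intro i
      have h1 : φ i ^ 2 ≤ 1 := by
        rw [← hφ]
        exact Finset.single_le_sum (fun j _ => sq_nonneg (φ j)) (Finset.mem_univ i)
      have := abs_le_one_iff_mul_self_le_one.2 (by nlinarith [h1, sq_abs (φ i)] : φ i * φ i ≤ 1)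
      simpa [Real.norm_eq_abs] using this
    have hScomp : IsCompact S := Metric.isCompact_of_isClosed_isBounded hScl hSbd
    have hSne : S.Nonempty := by
      refine ⟨Pi.single ⟨0, hn⟩ 1, ?_⟩
      simp only [hS, Set.mem_setOf_eq]
      rw [Finset.sum_eq_single ⟨0, hn⟩]
      · simp
      · intro j _ hj; simp [Pi.single_eq_of_ne hj]
      · simp
    obtain ⟨φ₀, hφ₀S, hmin⟩ := hScomp.exists_isMinOn hSne (quad_cont' n M).continuousOn
    have hφ₀ne : φ₀ ≠ 0 := by
      intro h
      have := hφ₀S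
      simp only [hS, Set.mem_setOf_eq, h] at this
      simp at this
    have hc : 0 < φ₀ ⬝ᵥ M.mulVec φ₀ := by
      have := hM.dotProduct_mulVec_pos hφ₀ne
      simpa using this
    refine ⟨φ₀ ⬝ᵥ M.mulVec φ₀, hc, fun φ => ?_⟩
    rcases eq_or_ne (∑ i, φ i ^ 2) 0 with h0 | h0
    · have hz : φ = 0 := by
        funext i
        have : φ i ^ 2 = 0 := by
          have h1 : ∀ j ∈ Finset.univ, (0:ℝ) ≤ φ j ^ 2 := fun j _ => sq_nonneg _
          exact le_antisymm (h0 ▸ Finset.single_le_sum h1 (Finset.mem_univ i)) (sq_nonneg _)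
        exact pow_eq_zero_iff (n := 2) (by norm_num) |>.1 this
      simp [hz, h0, dotProduct]
    · have hpos : 0 < ∑ i, φ i ^ 2 :=
        lt_of_le_of_ne (Finset.sum_nonneg fun i _ => sq_nonneg _) (Ne.symm h0)
      set r := Real.sqrt (∑ i, φ i ^ 2) with hr
      have hrpos : 0 < r := Real.sqrt_pos.2 hpos
      have hψS : (r⁻¹ • φ) ∈ S := by
        simp only [hS, Set.mem_setOf_eq, Pi.smul_apply, smul_eq_mul, mul_pow]
        rw [← Finset.mul_sum]
        rw [inv_pow, Real.sq_sqrt hpos.le]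
        field_simp
      have hmin' := hmin hψS
      have hq : (r⁻¹ • φ) ⬝ᵥ M.mulVec (r⁻¹ • φ) = r⁻¹^2 * (φ ⬝ᵥ M.mulVec φ) :=
        quad_smul' n M r⁻¹ φ
      have hr2 : r ^ 2 = ∑ i, φ i ^ 2 := Real.sq_sqrt hpos.le
      have h2 : φ₀ ⬝ᵥ M.mulVec φ₀ ≤ r⁻¹^2 * (φ ⬝ᵥ M.mulVec φ) := hq ▸ hmin'
      have h3 : (r^2) * (φ₀ ⬝ᵥ M.mulVec φ₀) ≤ φ ⬝ᵥ M.mulVec φ := by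
        have hmm := mul_le_mul_of_nonneg_left h2 (sq_nonneg r)
        calc r^2 * (φ₀ ⬝ᵥ M.mulVec φ₀) ≤ r^2 * (r⁻¹^2 * (φ ⬝ᵥ M.mulVec φ)) := hmm
          _ = φ ⬝ᵥ M.mulVec φ := by field_simp
      calc (φ₀ ⬝ᵥ M.mulVec φ₀) * (∑ i, φ i ^ 2) = r^2 * (φ₀ ⬝ᵥ M.mulVec φ₀) := by rw [hr2]; ring
        _ ≤ φ ⬝ᵥ M.mulVec φ := h3

lemma integrable_smul_D {n : ℕ} {M : Matrix (Fin n) (Fin n) ℝ} (hM : M.PosDef)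
    {E : Type*} [NormedAddCommGroup E] [NormedSpace ℝ E]
    {f : (Fin n → ℝ) → E} (hf : Continuous f) (C c : ℝ) (k : ℕ)
    (hb : ∀ φ, ‖f φ‖ ≤ C * (1 + ‖φ‖) ^ k * Real.exp (c * ‖φ‖)) :
    Integrable (fun φ : Fin n → ℝ => Real.exp (-(1/4) * (φ ⬝ᵥ M.mulVec φ)) • f φ) := by
  obtain ⟨c0, hc0, hQ⟩ := quad_lower n M hM
  set η := c0 / 8 with hη_def
  have hη : 0 < η := by positivity
  set C' := |C| * Real.exp ((k : ℝ) + ((k : ℝ) + c) ^ 2 / (4 * η)) with hC'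
  have hg : Integrable (fun φ : Fin n → ℝ => C' * ∏ i, Real.exp (-η * φ i ^ 2)) :=
    (Integrable.fintype_prod (fun _ => integrable_exp_neg_mul_sq hη)).const_mul C'
  have hmeas : AEStronglyMeasurable
      (fun φ : Fin n → ℝ => Real.exp (-(1/4) * (φ ⬝ᵥ M.mulVec φ)) • f φ) volume := by
    apply Continuous.aestronglyMeasurable
    exact ((Real.continuous_exp.comp (continuous_const.mul (quad_cont' n M))).smul hf)
  refine hg.mono hmeas (Filter.Eventually.of_forall fun φ => ?_)
  set t := ‖φ‖ with ht_def
  have ht : 0 ≤ t := norm_nonneg φ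
  set S := ∑ i, φ i ^ 2 with hS_def
  have hSnn : 0 ≤ S := Finset.sum_nonneg fun i _ => sq_nonneg _
  have ht2S : t ^ 2 ≤ S := by
    have h1 : t ≤ Real.sqrt S := by
      rw [pi_norm_le_iff_of_nonneg (Real.sqrt_nonneg S)]
      intro i
      have : φ i ^ 2 ≤ S := Finset.single_le_sum (fun j _ => sq_nonneg (φ j)) (Finset.mem_univ i)
      calc ‖φ i‖ = Real.sqrt (φ i ^ 2) := by rw [Real.sqrt_sq_eq_abs]; rfl
        _ ≤ Real.sqrt S := Real.sqrt_le_sqrt this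
    calc t ^ 2 ≤ Real.sqrt S ^ 2 := by nlinarith [Real.sqrt_nonneg S]
      _ = S := Real.sq_sqrt hSnn
  have hDle : Real.exp (-(1/4) * (φ ⬝ᵥ M.mulVec φ))
      ≤ Real.exp (-η * t ^ 2) * Real.exp (-η * S) := by
    rw [← Real.exp_add]
    apply Real.exp_le_exp.2
    have := hQ φ
    nlinarith [ht2S]
  have hfb := hb φ
  have hpow : (1 + t) ^ k ≤ Real.exp ((k : ℝ) * (1 + t)) := by
    calc (1 + t) ^ k ≤ Real.exp (1 + t) ^ k :=
          pow_le_pow_left₀ (by linarith) (by linarith [Real.add_one_le_exp (1 + t)]) k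
      _ = Real.exp ((k : ℝ) * (1 + t)) := by rw [← Real.exp_nat_mul]
  have hexp_ineq : Real.exp ((k : ℝ) * (1 + t)) * Real.exp (c * t) * Real.exp (-η * t ^ 2)
      ≤ Real.exp ((k : ℝ) + ((k : ℝ) + c) ^ 2 / (4 * η)) := by
    rw [← Real.exp_add, ← Real.exp_add]
    apply Real.exp_le_exp.2
    have h4η : 0 < 4 * η := by linarith
    have key : ((k : ℝ) + c) * t - η * t ^ 2 ≤ ((k : ℝ) + c) ^ 2 / (4 * η) := by
      rw [le_div_iff₀ h4η]
      nlinarith [sq_nonneg (2 * η * t - ((k : ℝ) + c)), hη]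
    linarith
  have key : ‖Real.exp (-(1/4) * (φ ⬝ᵥ M.mulVec φ)) • f φ‖
      ≤ C' * ∏ i, Real.exp (-η * φ i ^ 2) := by
    have hprod : Real.exp (-η * S) = ∏ i, Real.exp (-η * φ i ^ 2) := by
      rw [hS_def, Finset.mul_sum, Real.exp_sum]
    rw [norm_smul, Real.norm_eq_abs, abs_of_pos (Real.exp_pos _), mul_comm]
    calc ‖f φ‖ * Real.exp (-(1/4) * (φ ⬝ᵥ M.mulVec φ))
        ≤ (C * (1 + t) ^ k * Real.exp (c * t)) * (Real.exp (-η * t ^ 2) * Real.exp (-η * S)) := by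
          apply mul_le_mul hfb hDle (Real.exp_pos _).le
          calc (0:ℝ) ≤ ‖f φ‖ := norm_nonneg _
            _ ≤ _ := hfb
      _ ≤ (|C| * (1 + t) ^ k * Real.exp (c * t)) * (Real.exp (-η * t ^ 2) * Real.exp (-η * S)) := by
          apply mul_le_mul_of_nonneg_right _ (by positivity)
          apply mul_le_mul_of_nonneg_right _ (Real.exp_pos _).le
          exact mul_le_mul_of_nonneg_right (le_abs_self C) (by positivity)
      _ ≤ (|C| * Real.exp ((k : ℝ) * (1 + t)) * Real.exp (c * t)) *
            (Real.exp (-η * t ^ 2) * Real.exp (-η * S)) := by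
          apply mul_le_mul_of_nonneg_right _ (by positivity)
          apply mul_le_mul_of_nonneg_right _ (Real.exp_pos _).le
          exact mul_le_mul_of_nonneg_left hpow (abs_nonneg C)
      _ = |C| * (Real.exp ((k : ℝ) * (1 + t)) * Real.exp (c * t) * Real.exp (-η * t ^ 2))
            * Real.exp (-η * S) := by ring
      _ ≤ |C| * Real.exp ((k : ℝ) + ((k : ℝ) + c) ^ 2 / (4 * η)) * Real.exp (-η * S) := by
          apply mul_le_mul_of_nonneg_right _ (Real.exp_pos _).le
          exact mul_le_mul_of_nonneg_left hexp_ineq (abs_nonneg C)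
      _ = C' * ∏ i, Real.exp (-η * φ i ^ 2) := by rw [hprod]
  calc ‖Real.exp (-(1/4) * (φ ⬝ᵥ M.mulVec φ)) • f φ‖
      ≤ C' * ∏ i, Real.exp (-η * φ i ^ 2) := key
    _ ≤ ‖C' * ∏ i, Real.exp (-η * φ i ^ 2)‖ := le_abs_self _

lemma bsymm (n : ℕ) (M : Matrix (Fin n) (Fin n) ℝ) (hM : M.IsHermitian)
    (x y : Fin n → ℝ) : x ⬝ᵥ M.mulVec y = y ⬝ᵥ M.mulVec x := by
  have hMt : Mᵀ = M := by
    have := hM.eq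
    rwa [Matrix.conjTranspose_eq_transpose_of_trivial] at this
  rw [Matrix.dotProduct_mulVec, ← Matrix.mulVec_transpose, hMt, dotProduct_comm]

lemma quad_expand (n : ℕ) (M : Matrix (Fin n) (Fin n) ℝ) (hM : M.IsHermitian)
    (φ t : Fin n → ℝ) :
    (φ + t) ⬝ᵥ M.mulVec (φ + t) = φ ⬝ᵥ M.mulVec φ + 2 * (t ⬝ᵥ M.mulVec φ) + t ⬝ᵥ M.mulVec t := by
  rw [Matrix.mulVec_add, dotProduct_add, add_dotProduct, add_dotProduct,
    bsymm n M hM φ t]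
  ring

section shift
variable {n : ℕ} {M : Matrix (Fin n) (Fin n) ℝ} (hM : M.PosDef) (a : Fin n → ℝ)

lemma cont_b (t : Fin n → ℝ) : Continuous (fun φ : Fin n → ℝ => t ⬝ᵥ M.mulVec φ) := by
  simp only [dotProduct, Matrix.mulVec]
  exact continuous_finset_sum _ fun i _ => continuous_const.mul
    (continuous_finset_sum _ fun j _ => continuous_const.mul (continuous_apply j))

lemma cont_L : Continuous (fun φ : Fin n → ℝ => ∑ i, a i * φ i) :=
  continuous_finset_sum _ fun i _ => continuous_const.mul (continuous_apply i)

lemma abs_L_le (φ : Fin n → ℝ) : |∑ i, a i * φ i| ≤ (∑ i, |a i|) * ‖φ‖ := by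
  calc |∑ i, a i * φ i| ≤ ∑ i, |a i * φ i| := Finset.abs_sum_le_sum_abs _ _
    _ ≤ ∑ i, |a i| * ‖φ‖ := by
        refine Finset.sum_le_sum fun i _ => ?_
        rw [abs_mul]
        exact mul_le_mul_of_nonneg_left (norm_le_pi_norm φ i) (abs_nonneg _)
    _ = (∑ i, |a i|) * ‖φ‖ := by rw [Finset.sum_mul]

lemma abs_b_le (t φ : Fin n → ℝ) :
    |t ⬝ᵥ M.mulVec φ| ≤ (∑ i, ∑ j, |t i * M i j|) * ‖φ‖ := by
  simp only [dotProduct, Matrix.mulVec]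
  calc |∑ i, t i * ∑ j, M i j * φ j| = |∑ i, ∑ j, t i * M i j * φ j| := by
        congr 1; refine Finset.sum_congr rfl fun i _ => ?_
        rw [Finset.mul_sum]; refine Finset.sum_congr rfl fun j _ => by ring
    _ ≤ ∑ i, ∑ j, |t i * M i j * φ j| := by
        refine (Finset.abs_sum_le_sum_abs _ _).trans ?_
        exact Finset.sum_le_sum fun i _ => Finset.abs_sum_le_sum_abs _ _
    _ ≤ ∑ i, ∑ j, |t i * M i j| * ‖φ‖ := by
        refine Finset.sum_le_sum fun i _ => Finset.sum_le_sum fun j _ => ?_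
        rw [abs_mul]
        exact mul_le_mul_of_nonneg_left (norm_le_pi_norm φ j) (abs_nonneg _)
    _ = (∑ i, ∑ j, |t i * M i j|) * ‖φ‖ := by rw [Finset.sum_mul]; simp [Finset.sum_mul]

include hM in
lemma integrable_D :
    Integrable (fun φ : Fin n → ℝ => Real.exp (-(1/4) * (φ ⬝ᵥ M.mulVec φ))) := by
  have := integrable_smul_D hM (f := fun _ : Fin n → ℝ => (1:ℝ)) continuous_const 1 0 0
    (fun φ => by simp)
  simpa using this

include hM in
lemma integrable_LD : Integrable (fun φ : Fin n → ℝ =>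
    (∑ i, a i * φ i) * Real.exp (-(1/4) * (φ ⬝ᵥ M.mulVec φ))) := by
  have := integrable_smul_D hM (f := fun φ : Fin n → ℝ => ∑ i, a i * φ i) (cont_L a)
    (∑ i, |a i|) 0 1 (fun φ => by
      rw [Real.norm_eq_abs]
      refine (abs_L_le a φ).trans ?_
      simp only [zero_mul, Real.exp_zero, mul_one, pow_one]
      have : (0:ℝ) ≤ ∑ i, |a i| := Finset.sum_nonneg fun i _ => abs_nonneg _
      nlinarith [norm_nonneg φ])
  refine this.congr (Filter.Eventually.of_forall fun φ => ?_)
  simp [smul_eq_mul, mul_comm]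

lemma zero_LD : ∫ φ : Fin n → ℝ,
    (∑ i, a i * φ i) * Real.exp (-(1/4) * (φ ⬝ᵥ M.mulVec φ)) = 0 := by
  have h := integral_neg_eq_self
    (fun φ : Fin n → ℝ => (∑ i, a i * φ i) * Real.exp (-(1/4) * (φ ⬝ᵥ M.mulVec φ))) volume
  have hQ : ∀ φ : Fin n → ℝ, ((-φ) ⬝ᵥ M.mulVec (-φ)) = (φ ⬝ᵥ M.mulVec φ) := by
    intro φ
    rw [Matrix.mulVec_neg, dotProduct_neg, neg_dotProduct, neg_neg]
  have h2 : ∀ φ : Fin n → ℝ,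
      (∑ i, a i * (-φ) i) * Real.exp (-(1/4) * ((-φ) ⬝ᵥ M.mulVec (-φ)))
        = -((∑ i, a i * φ i) * Real.exp (-(1/4) * (φ ⬝ᵥ M.mulVec φ))) := by
    intro φ
    rw [hQ φ]
    simp only [Pi.neg_apply, mul_neg, Finset.sum_neg_distrib]
    ring
  rw [show (fun φ : Fin n → ℝ =>
        (∑ i, a i * (-φ) i) * Real.exp (-(1/4) * ((-φ) ⬝ᵥ M.mulVec (-φ))))
      = (fun φ : Fin n → ℝ =>
        -((∑ i, a i * φ i) * Real.exp (-(1/4) * (φ ⬝ᵥ M.mulVec φ)))) from funext h2] at h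
  rw [integral_neg] at h
  linarith

include hM in
lemma shift0 (t : Fin n → ℝ) :
    ∫ φ : Fin n → ℝ, Real.exp ((1/2) * (t ⬝ᵥ M.mulVec φ))
        * Real.exp (-(1/4) * (φ ⬝ᵥ M.mulVec φ))
      = Real.exp ((1/4) * (t ⬝ᵥ M.mulVec t))
          * ∫ φ : Fin n → ℝ, Real.exp (-(1/4) * (φ ⬝ᵥ M.mulVec φ)) := by
  have key := integral_add_right_eq_self (μ := volume)
    (fun φ : Fin n → ℝ => Real.exp ((1/2) * (t ⬝ᵥ M.mulVec φ))
      * Real.exp (-(1/4) * (φ ⬝ᵥ M.mulVec φ))) t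
  rw [← key]
  have hpt : ∀ φ : Fin n → ℝ,
      Real.exp ((1/2) * (t ⬝ᵥ M.mulVec (φ + t)))
          * Real.exp (-(1/4) * ((φ + t) ⬝ᵥ M.mulVec (φ + t)))
        = Real.exp ((1/4) * (t ⬝ᵥ M.mulVec t))
          * Real.exp (-(1/4) * (φ ⬝ᵥ M.mulVec φ)) := by
    intro φ
    rw [← Real.exp_add, ← Real.exp_add]
    congr 1
    rw [quad_expand n M hM.1 φ t, Matrix.mulVec_add, dotProduct_add]
    ring
  simp_rw [hpt]
  rw [integral_const_mul]

include hM in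
lemma shift1 (t : Fin n → ℝ) :
    ∫ φ : Fin n → ℝ, (∑ i, a i * φ i) * Real.exp ((1/2) * (t ⬝ᵥ M.mulVec φ))
        * Real.exp (-(1/4) * (φ ⬝ᵥ M.mulVec φ))
      = Real.exp ((1/4) * (t ⬝ᵥ M.mulVec t)) * (∑ i, a i * t i)
          * ∫ φ : Fin n → ℝ, Real.exp (-(1/4) * (φ ⬝ᵥ M.mulVec φ)) := by
  have key := integral_add_right_eq_self (μ := volume)
    (fun φ : Fin n → ℝ => (∑ i, a i * φ i) * Real.exp ((1/2) * (t ⬝ᵥ M.mulVec φ))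
      * Real.exp (-(1/4) * (φ ⬝ᵥ M.mulVec φ))) t
  rw [← key]
  have hpt : ∀ φ : Fin n → ℝ,
      (∑ i, a i * (φ + t) i) * Real.exp ((1/2) * (t ⬝ᵥ M.mulVec (φ + t)))
          * Real.exp (-(1/4) * ((φ + t) ⬝ᵥ M.mulVec (φ + t)))
        = Real.exp ((1/4) * (t ⬝ᵥ M.mulVec t))
            * ((∑ i, a i * φ i) * Real.exp (-(1/4) * (φ ⬝ᵥ M.mulVec φ)))
          + (Real.exp ((1/4) * (t ⬝ᵥ M.mulVec t)) * (∑ i, a i * t i))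
            * Real.exp (-(1/4) * (φ ⬝ᵥ M.mulVec φ)) := by
    intro φ
    have he : Real.exp ((1/2) * (t ⬝ᵥ M.mulVec (φ + t)))
        * Real.exp (-(1/4) * ((φ + t) ⬝ᵥ M.mulVec (φ + t)))
        = Real.exp ((1/4) * (t ⬝ᵥ M.mulVec t))
          * Real.exp (-(1/4) * (φ ⬝ᵥ M.mulVec φ)) := by
      rw [← Real.exp_add, ← Real.exp_add]
      congr 1
      rw [quad_expand n M hM.1 φ t, Matrix.mulVec_add, dotProduct_add]
      ring
    have hl : (∑ i, a i * (φ + t) i) = (∑ i, a i * φ i) + (∑ i, a i * t i) := by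
      rw [← Finset.sum_add_distrib]
      refine Finset.sum_congr rfl fun i _ => ?_
      simp [mul_add]
    rw [mul_assoc, he, hl]
    ring
  simp_rw [hpt]
  rw [integral_add ((integrable_LD hM a).const_mul _) ((integrable_D hM).const_mul _),
    integral_const_mul, integral_const_mul, zero_LD a]
  ring
end shift

section deriv
open Metric
variable {n : ℕ} {M : Matrix (Fin n) (Fin n) ℝ} (hM : M.PosDef)
  {α β : (Fin n → ℝ) → ℝ} (hα : Continuous α) (hβ : Continuous β)
  {Ca Cb : ℝ} (hCa : 0 ≤ Ca) (hCb : 0 ≤ Cb)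
  (hαb : ∀ φ, |α φ| ≤ Ca * ‖φ‖) (hβb : ∀ φ, |β φ| ≤ Cb * ‖φ‖)
  {w : (Fin n → ℝ) → ℂ} (hw : Continuous w) {Cw cw : ℝ} {kw : ℕ} (hCw : 0 ≤ Cw)
  (hwb : ∀ φ, ‖w φ‖ ≤ Cw * (1 + ‖φ‖) ^ kw * Real.exp (cw * ‖φ‖))

include hM hα hβ hCa hCb hαb hβb hw hCw hwb in
lemma hasDerivAt_int (z₀ : ℂ) :
    HasDerivAt (fun z : ℂ => ∫ φ : Fin n → ℝ,
        w φ * Complex.exp ((α φ : ℂ) + z * (β φ : ℂ))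
          * ((Real.exp (-(1/4) * (φ ⬝ᵥ M.mulVec φ)) : ℝ) : ℂ))
      (∫ φ : Fin n → ℝ,
        (w φ * (β φ : ℂ)) * Complex.exp ((α φ : ℂ) + z₀ * (β φ : ℂ))
          * ((Real.exp (-(1/4) * (φ ⬝ᵥ M.mulVec φ)) : ℝ) : ℂ)) z₀ := by
  have hre : ∀ (z : ℂ) (φ : Fin n → ℝ), ((α φ : ℂ) + z * (β φ : ℂ)).re = α φ + z.re * β φ := by
    intro z φ
    simp [Complex.add_re, Complex.mul_re]
  have hcontF : ∀ z : ℂ, Continuous (fun φ : Fin n → ℝ =>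
      w φ * Complex.exp ((α φ : ℂ) + z * (β φ : ℂ))
        * ((Real.exp (-(1/4) * (φ ⬝ᵥ M.mulVec φ)) : ℝ) : ℂ)) := by
    intro z
    apply Continuous.mul
    · exact hw.mul (Complex.continuous_exp.comp
        ((Complex.continuous_ofReal.comp hα).add
          (continuous_const.mul (Complex.continuous_ofReal.comp hβ))))
    · exact Complex.continuous_ofReal.comp
        (Real.continuous_exp.comp (continuous_const.mul (quad_cont' n M)))
  have hexp_bd : ∀ (z : ℂ), z ∈ ball z₀ 1 → ∀ φ : Fin n → ℝ,
      ‖Complex.exp ((α φ : ℂ) + z * (β φ : ℂ))‖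
        ≤ Real.exp ((Ca + (|z₀.re| + 1) * Cb) * ‖φ‖) := by
    intro z hz φ
    rw [Complex.norm_exp, hre]
    apply Real.exp_le_exp.2
    have h1 : |z.re| ≤ |z₀.re| + 1 := by
      have hz' : ‖z - z₀‖ < 1 := by rwa [mem_ball, dist_eq_norm] at hz
      calc |z.re| ≤ |z₀.re| + |z.re - z₀.re| := by
            linarith [abs_sub_abs_le_abs_sub z.re z₀.re, abs_sub (z.re) (z₀.re),
              le_abs_self (z.re - z₀.re), abs_nonneg (z.re - z₀.re),
              (abs_sub_le_iff.1 (le_refl |z.re - z₀.re|)).1]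
        _ ≤ |z₀.re| + 1 := by
            have h2 : |z.re - z₀.re| ≤ 1 := by
              calc |z.re - z₀.re| = |(z - z₀).re| := by simp [Complex.sub_re]
                _ ≤ ‖z - z₀‖ := Complex.abs_re_le_norm _
                _ ≤ 1 := hz'.le
            linarith
    calc α φ + z.re * β φ ≤ |α φ| + |z.re| * |β φ| := by
          have h3 : z.re * β φ ≤ |z.re| * |β φ| := by
            calc z.re * β φ ≤ |z.re * β φ| := le_abs_self _
              _ = |z.re| * |β φ| := abs_mul _ _
          linarith [le_abs_self (α φ)]
      _ ≤ Ca * ‖φ‖ + (|z₀.re| + 1) * (Cb * ‖φ‖) := by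
          have h4 := hαb φ
          have h5 := hβb φ
          have h6 : |z.re| * |β φ| ≤ (|z₀.re| + 1) * (Cb * ‖φ‖) := by
            apply mul_le_mul h1 h5 (abs_nonneg _)
            positivity
          linarith
      _ = (Ca + (|z₀.re| + 1) * Cb) * ‖φ‖ := by ring
  set c₁ : ℝ := cw + Ca + (|z₀.re| + 1) * Cb with hc₁
  have hFint : Integrable (fun φ : Fin n → ℝ =>
      w φ * Complex.exp ((α φ : ℂ) + z₀ * (β φ : ℂ))
        * ((Real.exp (-(1/4) * (φ ⬝ᵥ M.mulVec φ)) : ℝ) : ℂ)) := by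
    have := integrable_smul_D hM (f := fun φ : Fin n → ℝ =>
        w φ * Complex.exp ((α φ : ℂ) + z₀ * (β φ : ℂ)))
      (hw.mul (Complex.continuous_exp.comp
        ((Complex.continuous_ofReal.comp hα).add
          (continuous_const.mul (Complex.continuous_ofReal.comp hβ)))))
      Cw c₁ kw ?_
    · refine this.congr (Filter.Eventually.of_forall fun φ => ?_)
      simp only [Complex.real_smul]
      ring
    · intro φ
      rw [norm_mul]
      calc ‖w φ‖ * ‖Complex.exp ((α φ : ℂ) + z₀ * (β φ : ℂ))‖
          ≤ (Cw * (1 + ‖φ‖) ^ kw * Real.exp (cw * ‖φ‖)) *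
              Real.exp ((Ca + (|z₀.re| + 1) * Cb) * ‖φ‖) := by
            apply mul_le_mul (hwb φ) (hexp_bd z₀ (mem_ball_self one_pos) φ)
              (norm_nonneg _)
            positivity
        _ = Cw * (1 + ‖φ‖) ^ kw * Real.exp (c₁ * ‖φ‖) := by
            rw [mul_assoc, ← Real.exp_add, hc₁,
              show cw * ‖φ‖ + (Ca + (|z₀.re| + 1) * Cb) * ‖φ‖
                = (cw + Ca + (|z₀.re| + 1) * Cb) * ‖φ‖ from by ring]
  set bnd : (Fin n → ℝ) → ℝ := fun φ =>
    (Real.exp (-(1/4) * (φ ⬝ᵥ M.mulVec φ)))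
      • ((Cw * Cb) * (1 + ‖φ‖) ^ (kw + 1) * Real.exp (c₁ * ‖φ‖)) with hbnd
  have hbnd_int : Integrable bnd := by
    apply integrable_smul_D hM (f := fun φ : Fin n → ℝ =>
        (Cw * Cb) * (1 + ‖φ‖) ^ (kw + 1) * Real.exp (c₁ * ‖φ‖))
      (by fun_prop) (Cw * Cb) c₁ (kw + 1)
    intro φ
    rw [Real.norm_eq_abs, abs_of_nonneg (by positivity)]
  have key := hasDerivAt_integral_of_dominated_loc_of_deriv_le
    (F := fun z : ℂ => fun φ : Fin n → ℝ =>
      w φ * Complex.exp ((α φ : ℂ) + z * (β φ : ℂ))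
        * ((Real.exp (-(1/4) * (φ ⬝ᵥ M.mulVec φ)) : ℝ) : ℂ))
    (F' := fun z : ℂ => fun φ : Fin n → ℝ =>
      (w φ * (β φ : ℂ)) * Complex.exp ((α φ : ℂ) + z * (β φ : ℂ))
        * ((Real.exp (-(1/4) * (φ ⬝ᵥ M.mulVec φ)) : ℝ) : ℂ))
    (x₀ := z₀) (bound := bnd) (ball_mem_nhds z₀ one_pos)
    (Filter.Eventually.of_forall fun z => (hcontF z).aestronglyMeasurable)
    hFint
    ?_ ?_ hbnd_int ?_
  · exact key.2
  · apply Continuous.aestronglyMeasurable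
    exact ((hw.mul (Complex.continuous_ofReal.comp hβ)).mul (Complex.continuous_exp.comp
        ((Complex.continuous_ofReal.comp hα).add
          (continuous_const.mul (Complex.continuous_ofReal.comp hβ))))).mul
      (Complex.continuous_ofReal.comp
        (Real.continuous_exp.comp (continuous_const.mul (quad_cont' n M))))
  · apply Filter.Eventually.of_forall
    intro φ z hz
    rw [norm_mul, norm_mul, Complex.norm_real, Real.norm_eq_abs,
      abs_of_pos (Real.exp_pos _)]
    have h1 : ‖w φ * (β φ : ℂ)‖ ≤ (Cw * Cb) * (1 + ‖φ‖) ^ (kw + 1) * Real.exp (cw * ‖φ‖) := by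
      rw [norm_mul, Complex.norm_real, Real.norm_eq_abs]
      calc ‖w φ‖ * |β φ| ≤ (Cw * (1 + ‖φ‖) ^ kw * Real.exp (cw * ‖φ‖)) * (Cb * ‖φ‖) :=
            mul_le_mul (hwb φ) (hβb φ) (abs_nonneg _) (by positivity)
        _ ≤ (Cw * (1 + ‖φ‖) ^ kw * Real.exp (cw * ‖φ‖)) * (Cb * (1 + ‖φ‖)) := by
            apply mul_le_mul_of_nonneg_left _ (by positivity)
            have := norm_nonneg φ
            nlinarith
        _ = (Cw * Cb) * (1 + ‖φ‖) ^ (kw + 1) * Real.exp (cw * ‖φ‖) := by ring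
    calc ‖w φ * (β φ : ℂ)‖ * ‖Complex.exp ((α φ : ℂ) + z * (β φ : ℂ))‖
          * Real.exp (-(1/4) * (φ ⬝ᵥ M.mulVec φ))
        ≤ ((Cw * Cb) * (1 + ‖φ‖) ^ (kw + 1) * Real.exp (cw * ‖φ‖)) *
            Real.exp ((Ca + (|z₀.re| + 1) * Cb) * ‖φ‖)
          * Real.exp (-(1/4) * (φ ⬝ᵥ M.mulVec φ)) := by
          apply mul_le_mul_of_nonneg_right _ (Real.exp_pos _).le
          apply mul_le_mul h1 (hexp_bd z hz φ) (norm_nonneg _) (by positivity)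
      _ = bnd φ := by
          simp only [hbnd, smul_eq_mul, hc₁]
          rw [show (cw + Ca + (|z₀.re| + 1) * Cb) * ‖φ‖
              = cw * ‖φ‖ + (Ca + (|z₀.re| + 1) * Cb) * ‖φ‖ from by ring, Real.exp_add]
          ring
  · apply Filter.Eventually.of_forall
    intro φ z hz
    have h1 : HasDerivAt (fun z : ℂ => (α φ : ℂ) + z * (β φ : ℂ)) ((β φ : ℂ)) z := by
      simpa using ((hasDerivAt_id z).mul_const ((β φ : ℂ))).const_add ((α φ : ℂ))
    have h2 := h1.cexp
    have h3 := (h2.const_mul (w φ)).mul_const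
      ((Real.exp (-(1/4) * (φ ⬝ᵥ M.mulVec φ)) : ℝ) : ℂ)
    exact h3.congr_deriv (by ring)
end deriv
end Aux

section MainAux
open scoped NNReal ENNReal

lemma gR_integral (n : ℕ) (M : Matrix (Fin n) (Fin n) ℝ) (f : (Fin n → ℝ) → ℂ) :
    ∫ φ, f φ ∂(gR n M)
      = (((volume.withDensity
            fun φ : Fin n → ℝ => ENNReal.ofReal (Real.exp (-(1/4) * (φ ⬝ᵥ M.mulVec φ))))
          Set.univ)⁻¹).toReal
        • ∫ φ : Fin n → ℝ, Real.exp (-(1/4) * (φ ⬝ᵥ M.mulVec φ)) • f φ := by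
  have hmeasD : Measurable fun φ : Fin n → ℝ =>
      (Real.exp (-(1/4) * (φ ⬝ᵥ M.mulVec φ))).toNNReal :=
    (continuous_real_toNNReal.comp
      (Real.continuous_exp.comp (continuous_const.mul (quad_cont' n M)))).measurable
  rw [gR, integral_smul_measure]
  congr 1
  rw [show (fun φ : Fin n → ℝ => ENNReal.ofReal (Real.exp (-(1/4) * (φ ⬝ᵥ M.mulVec φ))))
      = (fun φ : Fin n → ℝ =>
          (((Real.exp (-(1/4) * (φ ⬝ᵥ M.mulVec φ))).toNNReal : ℝ≥0) : ℝ≥0∞)) from rfl]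
  rw [integral_withDensity_eq_integral_smul hmeasD f]
  refine integral_congr_ae (Filter.Eventually.of_forall fun φ => ?_)
  simp only [NNReal.smul_def]
  rw [Real.coe_toNNReal _ (Real.exp_pos _).le]
end MainAux

/-- Berezin–Toeplitz quantization of a linear observable on coherent states:
for a linear `F(φ) = ∑ a_i φ_i` on `ℝⁿ` (extended ℂ-linearly to `ℂⁿ`) and any
`ξ = ξ^R + i ξ^I ∈ ℂⁿ`, `ρ^F(K_ξ) = F(ξ^R − i ξ^I) · ρ(K_ξ)`. -/
theorem stmt13 (n : ℕ) (M : Matrix (Fin n) (Fin n) ℝ) (hM : M.PosDef)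
    (a : Fin n → ℝ) (FC : (Fin n → ℂ) → ℂ)
    (hFC : ∀ z, FC z = ∑ i, (a i : ℂ) * z i)
    (ξR ξI : Fin n → ℝ) :
    ∫ φ, Kc n M ξR ξI φ * FC (cR n φ) ∂gR n M
      = FC (cR n ξR - Complex.I • cR n ξI) * ∫ φ, Kc n M ξR ξI φ ∂gR n M := by
  classical
  set Dr : (Fin n → ℝ) → ℝ := fun φ => Real.exp (-(1/4) * (φ ⬝ᵥ M.mulVec φ)) with hDr
  set L : (Fin n → ℝ) → ℝ := fun φ => ∑ i, a i * φ i with hL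
  set αf : (Fin n → ℝ) → ℝ := fun φ => (1/2) * (ξR ⬝ᵥ M.mulVec φ) with hαf
  set βf : (Fin n → ℝ) → ℝ := fun φ => (1/2) * (ξI ⬝ᵥ M.mulVec φ) with hβf
  set p : ℝ := ∑ i, a i * ξR i with hp
  set q : ℝ := ∑ i, a i * ξI i with hq
  -- pointwise identities
  have hgCreal : ∀ t φ : Fin n → ℝ, gC n M (cR n t) (cR n φ) = ((t ⬝ᵥ M.mulVec φ : ℝ) : ℂ) := by
    intro t φ
    simp only [gC, cR, dotProduct, Matrix.mulVec]
    push_cast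
    refine Finset.sum_congr rfl fun i _ => ?_
    rw [Finset.mul_sum]
    exact Finset.sum_congr rfl fun j _ => by ring
  have hKeq : ∀ φ, Kc n M ξR ξI φ
      = Complex.exp ((αf φ : ℂ) + (-Complex.I) * (βf φ : ℂ)) := by
    intro φ
    rw [Kc, hgCreal, hgCreal]
    congr 1
    simp only [hαf, hβf]
    push_cast
    ring
  have hFCφ : ∀ φ : Fin n → ℝ, FC (cR n φ) = ((L φ : ℝ) : ℂ) := by
    intro φ
    rw [hFC]
    simp only [cR, hL]
    push_cast
    rfl
  have hFCζ : FC (cR n ξR - Complex.I • cR n ξI) = (p : ℂ) + (-Complex.I) * (q : ℂ) := by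
    rw [hFC]
    have hterm : ∀ i, ((a i : ℂ)) * ((cR n ξR - Complex.I • cR n ξI) i)
        = ((a i * ξR i : ℝ) : ℂ) + (-Complex.I) * ((a i * ξI i : ℝ) : ℂ) := by
      intro i
      simp only [Pi.sub_apply, Pi.smul_apply, cR, smul_eq_mul]
      push_cast
      ring
    rw [Finset.sum_congr rfl fun i _ => hterm i, Finset.sum_add_distrib, ← Finset.mul_sum]
    simp only [hp, hq]
    push_cast
    ring
  -- analytic family
  set Bf : ℂ → ℂ := fun z => ∫ φ : Fin n → ℝ,
    (1:ℂ) * Complex.exp ((αf φ : ℂ) + z * (βf φ : ℂ)) * ((Dr φ : ℝ) : ℂ) with hBfdef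
  set Af : ℂ → ℂ := fun z => ∫ φ : Fin n → ℝ,
    ((L φ : ℝ) : ℂ) * Complex.exp ((αf φ : ℂ) + z * (βf φ : ℂ)) * ((Dr φ : ℝ) : ℂ) with hAfdef
  -- bounds for the derivative lemma
  set CA : ℝ := (1/2) * ∑ i, ∑ j, |ξR i * M i j| with hCA
  set CB : ℝ := (1/2) * ∑ i, ∑ j, |ξI i * M i j| with hCB
  have hCA0 : 0 ≤ CA := by
    rw [hCA]
    have : (0:ℝ) ≤ ∑ i, ∑ j, |ξR i * M i j| :=
      Finset.sum_nonneg fun i _ => Finset.sum_nonneg fun j _ => abs_nonneg _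
    linarith
  have hCB0 : 0 ≤ CB := by
    rw [hCB]
    have : (0:ℝ) ≤ ∑ i, ∑ j, |ξI i * M i j| :=
      Finset.sum_nonneg fun i _ => Finset.sum_nonneg fun j _ => abs_nonneg _
    linarith
  have hαb : ∀ φ, |αf φ| ≤ CA * ‖φ‖ := by
    intro φ
    rw [hαf, hCA, abs_mul, abs_of_pos (by norm_num : (0:ℝ) < 1/2), mul_assoc]
    exact mul_le_mul_of_nonneg_left (abs_b_le ξR φ) (by norm_num)
  have hβb : ∀ φ, |βf φ| ≤ CB * ‖φ‖ := by
    intro φ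
    rw [hβf, hCB, abs_mul, abs_of_pos (by norm_num : (0:ℝ) < 1/2), mul_assoc]
    exact mul_le_mul_of_nonneg_left (abs_b_le ξI φ) (by norm_num)
  have hαcont : Continuous αf := continuous_const.mul (cont_b ξR)
  have hβcont : Continuous βf := continuous_const.mul (cont_b ξI)
  have hAdiff : Differentiable ℂ Af := by
    intro z₀
    refine (hasDerivAt_int hM hαcont hβcont hCA0 hCB0 hαb hβb
      (w := fun φ => ((L φ : ℝ) : ℂ)) (Complex.continuous_ofReal.comp (cont_L a))
      (Cw := ∑ i, |a i|) (cw := 0) (kw := 1)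
      (Finset.sum_nonneg fun i _ => abs_nonneg _) ?_ z₀).differentiableAt
    intro φ
    rw [Complex.norm_real, Real.norm_eq_abs]
    refine (abs_L_le a φ).trans ?_
    simp only [zero_mul, Real.exp_zero, mul_one, pow_one]
    have h0 : (0:ℝ) ≤ ∑ i, |a i| := Finset.sum_nonneg fun i _ => abs_nonneg _
    nlinarith [norm_nonneg φ]
  have hBdiff : Differentiable ℂ Bf := by
    intro z₀
    refine (hasDerivAt_int hM hαcont hβcont hCA0 hCB0 hαb hβb
      (w := fun _ => (1:ℂ)) continuous_const
      (Cw := 1) (cw := 0) (kw := 0) zero_le_one ?_ z₀).differentiableAt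
    intro φ
    simp
  -- values at real points
  have hBs : ∀ s : ℝ, Bf (s : ℂ)
      = ((Real.exp ((1/4) * ((ξR + s • ξI) ⬝ᵥ M.mulVec (ξR + s • ξI)))
          * ∫ φ : Fin n → ℝ, Dr φ : ℝ) : ℂ) := by
    intro s
    have hpt : ∀ φ : Fin n → ℝ,
        (1:ℂ) * Complex.exp ((αf φ : ℂ) + (s : ℂ) * (βf φ : ℂ)) * ((Dr φ : ℝ) : ℂ)
          = ((Real.exp ((1/2) * ((ξR + s • ξI) ⬝ᵥ M.mulVec φ)) * Dr φ : ℝ) : ℂ) := by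
      intro φ
      have harg : αf φ + s * βf φ = (1/2) * ((ξR + s • ξI) ⬝ᵥ M.mulVec φ) := by
        simp only [hαf, hβf, add_dotProduct, smul_dotProduct, smul_eq_mul]
        ring
      rw [one_mul, show ((αf φ : ℂ) + (s : ℂ) * (βf φ : ℂ)) = ((αf φ + s * βf φ : ℝ) : ℂ) by
        push_cast; ring, harg, ← Complex.ofReal_exp, ← Complex.ofReal_mul]
    rw [hBfdef]
    simp only [hpt]
    exact integral_ofReal.trans (congrArg Complex.ofReal (shift0 hM (ξR + s • ξI)))
  have hAs : ∀ s : ℝ, Af (s : ℂ)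
      = ((Real.exp ((1/4) * ((ξR + s • ξI) ⬝ᵥ M.mulVec (ξR + s • ξI)))
          * (p + s * q) * ∫ φ : Fin n → ℝ, Dr φ : ℝ) : ℂ) := by
    intro s
    have hpt : ∀ φ : Fin n → ℝ,
        ((L φ : ℝ) : ℂ) * Complex.exp ((αf φ : ℂ) + (s : ℂ) * (βf φ : ℂ)) * ((Dr φ : ℝ) : ℂ)
          = ((L φ * Real.exp ((1/2) * ((ξR + s • ξI) ⬝ᵥ M.mulVec φ)) * Dr φ : ℝ) : ℂ) := by
      intro φ
      have harg : αf φ + s * βf φ = (1/2) * ((ξR + s • ξI) ⬝ᵥ M.mulVec φ) := by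
        simp only [hαf, hβf, add_dotProduct, smul_dotProduct, smul_eq_mul]
        ring
      rw [show ((αf φ : ℂ) + (s : ℂ) * (βf φ : ℂ)) = ((αf φ + s * βf φ : ℝ) : ℂ) by
        push_cast; ring, harg, ← Complex.ofReal_exp]
      push_cast
      ring
    have hLt : L (ξR + s • ξI) = p + s * q := by
      simp only [hL, hp, hq, Pi.add_apply, Pi.smul_apply, smul_eq_mul, mul_add]
      rw [Finset.sum_add_distrib, Finset.mul_sum]
      congr 1
      exact Finset.sum_congr rfl fun i _ => by ring
    rw [hAfdef]
    simp only [hpt]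
    refine integral_ofReal.trans (congrArg Complex.ofReal ?_)
    rw [show Real.exp ((1/4) * ((ξR + s • ξI) ⬝ᵥ M.mulVec (ξR + s • ξI))) * (p + s * q)
        = Real.exp ((1/4) * ((ξR + s • ξI) ⬝ᵥ M.mulVec (ξR + s • ξI))) * L (ξR + s • ξI) from by
          rw [hLt]]
    simp only [hDr, hL]
    exact shift1 hM a (ξR + s • ξI)
  -- the function H vanishes on the reals, hence everywhere
  set H : ℂ → ℂ := fun z => Af z - ((p : ℂ) + z * (q : ℂ)) * Bf z with hHdef
  have hHdiff : Differentiable ℂ H :=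
    hAdiff.sub (((differentiable_const _).add (differentiable_id.mul (differentiable_const _))).mul hBdiff)
  have hH0 : ∀ s : ℝ, H (s : ℂ) = 0 := by
    intro s
    simp only [hHdef]
    rw [hAs s, hBs s]
    push_cast
    ring
  have han : AnalyticOnNhd ℂ H Set.univ := by
    rw [Complex.analyticOnNhd_univ_iff_differentiable]
    exact hHdiff
  have hfreq : ∃ᶠ z in nhdsWithin (0 : ℂ) {z : ℂ | z ≠ 0}, H z = 0 := by
    have htend : Filter.Tendsto (fun m : ℕ => ((1 / (m + 1) : ℝ) : ℂ)) Filter.atTop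
        (nhdsWithin (0 : ℂ) {z : ℂ | z ≠ 0}) := by
      refine tendsto_nhdsWithin_of_tendsto_nhds_of_eventually_within _ ?_ ?_
      · have h0 : Filter.Tendsto (fun m : ℕ => (1 / (m + 1) : ℝ)) Filter.atTop (nhds 0) :=
          tendsto_one_div_add_atTop_nhds_zero_nat
        have := (Complex.continuous_ofReal.tendsto 0).comp h0
        simpa [Function.comp_def, one_div] using this
      · apply Filter.Eventually.of_forall
        intro m
        simp only [Set.mem_setOf_eq, ne_eq, Complex.ofReal_eq_zero]
        positivity
    exact htend.frequently (Filter.Frequently.of_forall fun m => hH0 _)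
  have hzero : H (-Complex.I) = 0 :=
    han.eqOn_zero_of_preconnected_of_frequently_eq_zero isPreconnected_univ
      (Set.mem_univ (0 : ℂ)) hfreq (Set.mem_univ (-Complex.I))
  have hABI : Af (-Complex.I) = ((p : ℂ) + (-Complex.I) * (q : ℂ)) * Bf (-Complex.I) := by
    have h := hzero
    simp only [hHdef] at h
    linear_combination h
  -- reduce the gR-integrals to the weighted volume integrals
  have hI1 : ∫ φ, Kc n M ξR ξI φ * FC (cR n φ) ∂gR n M
      = (((volume.withDensity
            fun φ : Fin n → ℝ => ENNReal.ofReal (Dr φ)) Set.univ)⁻¹).toReal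
        • Af (-Complex.I) := by
    rw [gR_integral n M]
    congr 1
    rw [hAfdef]
    refine integral_congr_ae (Filter.Eventually.of_forall fun φ => ?_)
    simp only [hKeq φ, hFCφ φ, Complex.real_smul]
    ring
  have hI0 : ∫ φ, Kc n M ξR ξI φ ∂gR n M
      = (((volume.withDensity
            fun φ : Fin n → ℝ => ENNReal.ofReal (Dr φ)) Set.univ)⁻¹).toReal
        • Bf (-Complex.I) := by
    rw [gR_integral n M]
    congr 1
    rw [hBfdef]
    refine integral_congr_ae (Filter.Eventually.of_forall fun φ => ?_)
    simp only [hKeq φ, Complex.real_smul]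
    ring
  rw [hI1, hI0, hFCζ, hABI, mul_smul_comm]
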